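/- For any Eulerian digraph D, the number of oriented spanning trees of D is independent of the choice of root vertex: for any two vertices r and r' of D, the number of oriented spanning trees rooted at r equals the number rooted at r'. -/

import Mathlib

open Classical

/-- A finite multidigraph: finite vertex and edge types with initial and final
vertex maps. -/
structure Multidigraph where
  V : Type
  E : Type
  [fintV : Fintype V]
  [fintE : Fintype E]
  first : E → V
  last : E → V

attribute [instance] Multidigraph.fintV Multidigraph.fintE

namespace Multidigraph

variable (D : Multidigraph)

/-- The out-degree of a vertex. -/
noncomputable def outdeg (v : D.V) : ℕ := Nat.card {e : D.E // D.first e = v}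

/-- The in-degree of a vertex. -/
noncomputable def indeg (v : D.V) : ℕ := Nat.card {e : D.E // D.last e = v}

/-- Undirected adjacency using only edges in `T`. -/
def Adj (T : Set D.E) (a b : D.V) : Prop :=
  ∃ e ∈ T, (D.first e = a ∧ D.last e = b) ∨ (D.first e = b ∧ D.last e = a)

/-- Undirected reachability using only edges in `T`. -/
def Reach (T : Set D.E) : D.V → D.V → Prop := Relation.ReflTransGen (D.Adj T)

/-- The underlying undirected graph is connected. -/
def Connected : Prop := ∀ a b : D.V, D.Reach Set.univ a b

/-- An Eulerian digraph: connected and with in-degree equal to out-degree at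
every vertex. -/
def Eulerian : Prop := D.Connected ∧ ∀ v : D.V, D.indeg v = D.outdeg v

/-- `T` is a spanning tree of the underlying undirected graph: it connects all
vertices and has `|V| - 1` edges. -/
def IsSpanningTree (T : Set D.E) : Prop :=
  (∀ a b : D.V, D.Reach T a b) ∧ Nat.card T = Nat.card D.V - 1

/-- The out-degree of `v` in the subgraph `T` after reversing the orientations
of the edges in `S`. -/
noncomputable def outdegRev (T S : Set D.E) (v : D.V) : ℕ :=
  Nat.card {e : D.E // (e ∈ T \ S ∧ D.first e = v) ∨ (e ∈ S ∧ D.last e = v)}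

/-- `T` becomes an oriented spanning tree rooted at `r` (every vertex has a
unique directed path to `r`, i.e. every non-root vertex has out-degree `1` and
the root has out-degree `0` in the tree) after reversing exactly the edges of
`S ⊆ T`. -/
def IsOrientedSpanningTreeRev (T S : Set D.E) (r : D.V) : Prop :=
  D.IsSpanningTree T ∧ S ⊆ T ∧ (∀ v : D.V, v ≠ r → D.outdegRev T S v = 1) ∧
    D.outdegRev T S r = 0

/-- `T` is an oriented spanning tree rooted at `r`: every vertex has a unique
directed path to `r`. -/
def IsOrientedSpanningTree (T : Set D.E) (r : D.V) : Prop :=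
  D.IsOrientedSpanningTreeRev T ∅ r

/-- `T` is a `k`-spanning tree rooted at `r`: reversing the orientation of
exactly `k` of its edges yields an oriented spanning tree rooted at `r`. -/
def IsKSpanningTree (T : Set D.E) (r : D.V) (k : ℕ) : Prop :=
  ∃ S : Set D.E, Nat.card S = k ∧ D.IsOrientedSpanningTreeRev T S r

/-- `c D k r` is the number of `k`-spanning trees of `D` rooted at `r`. -/
noncomputable def c (k : ℕ) (r : D.V) : ℕ :=
  Nat.card {T : Set D.E // D.IsKSpanningTree T r k}

/-- The transpose digraph: every edge reversed. -/
def transpose : Multidigraph := { D with first := D.last, last := D.first }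

end Multidigraph


/-!
By the matrix-tree theorem, the number of oriented spanning trees rooted at `r` is the `(r, r)`
cofactor of the out-degree Laplacian `L`: expanding the reduced Laplacian row by row runs over the
choices of one out-edge at each non-root vertex, and a choice contributes `1` if following it
always leads to `r` (its edges then form an oriented spanning tree) and `0` if it closes a cycle.
The rows of `L` always sum to zero, and its columns do too when in-degrees equal out-degrees; for
such a matrix all entries of the adjugate are equal.
-/

namespace Matrix

variable {n R : Type*} [Fintype n] [DecidableEq n] [CommRing R]

theorem adjugate_apply_eq_of_forall_sum_row_eq_zero {A : Matrix n n R}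
    (hA : ∀ i, ∑ j, A i j = 0) (i i' j : n) : A.adjugate i j = A.adjugate i' j := by
  rw [adjugate_apply, adjugate_apply,
    show (Pi.single i 1 : n → R) = Pi.single i' 1 + (Pi.single i 1 - Pi.single i' 1) by abel,
    det_updateRow_add, add_eq_left]
  -- the constant vector `1` is killed: row `j` sums to `1 - 1`, every other row to `0`
  refine det_eq_zero_of_mulVec_eq_zero_of_mem_nonZeroDivisors (v := fun _ => 1) ?_
    (i := j) (Submonoid.one_mem _)
  funext k
  by_cases hk : k = j
  · subst hk
    simp [mulVec, dotProduct, Finset.sum_sub_distrib]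
  · simp [mulVec, dotProduct, updateRow_ne hk, hA k]

theorem adjugate_apply_eq_of_forall_sum_col_eq_zero {A : Matrix n n R}
    (hA : ∀ j, ∑ i, A i j = 0) (i j j' : n) : A.adjugate i j = A.adjugate i j' := by
  simpa [← adjugate_transpose] using
    adjugate_apply_eq_of_forall_sum_row_eq_zero (A := Aᵀ) hA j j' i

theorem adjugate_apply_self_eq_det_submatrix (A : Matrix n n R) (r : n) :
    A.adjugate r r = (A.submatrix ((↑) : {i // i ≠ r} → n) (↑)).det := by
  rw [adjugate_apply, twoBlockTriangular_det' _ (· = r)]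
  · have hr : ∀ i : {i // i = r}, (i : n) = r := Subtype.prop
    simp only [toSquareBlockProp, det_unique, toBlock_apply, hr, updateRow_self,
      Pi.single_eq_same, one_mul]
    congr 1
    ext ⟨i, hi⟩ ⟨j, hj⟩
    simp [toBlock, updateRow_ne hi]
  · intro i hi j hj
    simp [hi, hj]

theorem det_of_sum_eq_sum_det {ι : n → Type*} [∀ i, Fintype (ι i)] (f : ∀ i, ι i → n → R) :
    (Matrix.of fun i => ∑ x, f i x).det = ∑ g : ∀ i, ι i, (Matrix.of fun i => f i (g i)).det :=
  detRowAlternating.toMultilinearMap.map_sum f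

theorem det_eq_one_of_apply_eq_one_apply_of_le {α : Type*} [LinearOrder α] {M : Matrix n n R}
    (b : n → α) (hM : ∀ i j, b i ≤ b j → M i j = (1 : Matrix n n R) i j) : M.det = 1 := by
  have hblock : M.BlockTriangular (OrderDual.toDual ∘ b) := fun i j hij =>
    (hM i j (le_of_lt hij)).trans (one_apply_ne (fun h => (h ▸ hij).false))
  rw [hblock.det]
  refine Finset.prod_eq_one fun a _ => ?_
  have hone : M.toSquareBlock (OrderDual.toDual ∘ b) a = 1 := by
    ext ⟨i, hi⟩ ⟨j, hj⟩
    simpa [toSquareBlock_def, one_apply, Subtype.ext_iff] using hM i j (hi.trans hj.symm).ge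
  rw [hone, det_one]

end Matrix

theorem Function.exists_iterate_apply_eq_iff_of_isFixedPt {α : Type*} {f : α → α} {r : α}
    (hr : Function.IsFixedPt f r) (x : α) : (∃ k, f^[k] (f x) = r) ↔ ∃ k, f^[k] x = r :=
  ⟨fun ⟨k, hk⟩ => ⟨k + 1, hk⟩,
    fun ⟨k, hk⟩ => ⟨k, by rw [← Function.iterate_succ_apply, Function.iterate_succ_apply', hk, hr]⟩⟩

theorem Fintype.sum_pi_single_one_apply {ι α R : Type*} [Fintype ι] [DecidableEq α]
    [NonAssocSemiring R] (f : ι → α) (a : α) :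
    ∑ i, (Pi.single (f i) 1 : α → R) a = Nat.card {i // f i = a} := by
  simp [Pi.single_apply, Finset.sum_boole, Nat.card_eq_fintype_card, Fintype.card_subtype,
    @eq_comm _ a]

namespace Multidigraph

variable (D : Multidigraph)

/-- The out-degree Laplacian `diag(outdeg) - A`, written as a sum over out-edges so that its rows
expand multilinearly. -/
noncomputable def laplacian : Matrix D.V D.V ℤ :=
  Matrix.of fun v => ∑ e : {e : D.E // D.first e = v}, (Pi.single v 1 - Pi.single (D.last e) 1)

theorem laplacian_row_sum_eq_zero (v : D.V) : ∑ w, D.laplacian v w = 0 := by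
  simp only [laplacian, Matrix.of_apply, Finset.sum_apply]
  rw [Finset.sum_comm]
  simp [Finset.sum_sub_distrib]

theorem laplacian_col_sum_eq_zero (hD : ∀ v, D.indeg v = D.outdeg v) (w : D.V) :
    ∑ v, D.laplacian v w = 0 := by
  have hfiber : ∀ v, D.laplacian v w = ∑ e : {e : D.E // D.first e = v},
      ((Pi.single (D.first e) 1 - Pi.single (D.last e) 1 : D.V → ℤ) w) := fun v => by
    simp only [laplacian, Matrix.of_apply, Finset.sum_apply, Pi.sub_apply]
    exact Finset.sum_congr rfl fun e _ => by rw [e.2]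
  rw [Fintype.sum_congr _ _ hfiber]
  refine (Fintype.sum_fiberwise D.first
    (fun e => (Pi.single (D.first e) 1 - Pi.single (D.last e) 1 : D.V → ℤ) w)).trans ?_
  simp only [Pi.sub_apply, Finset.sum_sub_distrib, Fintype.sum_pi_single_one_apply]
  rw [← outdeg, ← indeg, hD, sub_self]

variable {D} {r : D.V}

theorem outdegRev_empty (T : Set D.E) (v : D.V) :
    D.outdegRev T ∅ v = Nat.card {e : D.E // e ∈ T ∧ D.first e = v} := by
  simp [outdegRev]

instance (T : Set D.E) : Std.Symm (D.Adj T) := ⟨fun _ _ ⟨e, he, h⟩ => ⟨e, he, h.symm⟩⟩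

theorem reach_symm {T : Set D.E} {a b : D.V} (h : D.Reach T a b) : D.Reach T b a :=
  Std.Symm.symm (r := Relation.ReflTransGen (D.Adj T)) _ _ h

variable (D r) in
abbrev OutEdgeChoice := ∀ v : {v : D.V // v ≠ r}, {e : D.E // D.first e = v}

namespace OutEdgeChoice

variable (g : D.OutEdgeChoice r)

noncomputable def next (v : D.V) : D.V := if h : v = r then r else D.last (g ⟨v, h⟩)

def edges : Set D.E := Set.range fun v => (g v : D.E)

def ReachesRoot (v : D.V) : Prop := ∃ k, g.next^[k] v = r

theorem next_root : g.next r = r := dif_pos rfl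

theorem next_of_ne {v : D.V} (hv : v ≠ r) : g.next v = D.last (g ⟨v, hv⟩) := dif_neg hv

theorem reachesRoot_root : g.ReachesRoot r := ⟨0, rfl⟩

theorem reachesRoot_next_iff (v : D.V) : g.ReachesRoot (g.next v) ↔ g.ReachesRoot v :=
  Function.exists_iterate_apply_eq_iff_of_isFixedPt g.next_root v

theorem edge_injective : Function.Injective fun v => (g v : D.E) := fun v w h =>
  Subtype.ext ((g v).2.symm.trans ((congrArg D.first h).trans (g w).2))

theorem card_edges : Nat.card g.edges = Nat.card D.V - 1 := by
  rw [edges, Nat.card_range_of_injective g.edge_injective, Nat.card_eq_fintype_card,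
    Nat.card_eq_fintype_card, ← Set.card_ne_eq r]
  rfl

theorem mem_edges_and_first_eq_iff {e : D.E} {v : D.V} (hv : v ≠ r) :
    e ∈ g.edges ∧ D.first e = v ↔ e = g ⟨v, hv⟩ := by
  constructor
  · rintro ⟨⟨w, rfl⟩, hw⟩
    rw [show w = ⟨v, hv⟩ from Subtype.ext ((g w).2.symm.trans hw)]
  · rintro rfl
    exact ⟨⟨_, rfl⟩, (g _).2⟩

theorem first_ne_root_of_mem_edges {e : D.E} (he : e ∈ g.edges) : D.first e ≠ r := by
  obtain ⟨w, rfl⟩ := he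
  rw [(g w).2]
  exact w.2

theorem next_first_of_mem_edges {e : D.E} (he : e ∈ g.edges) : g.next (D.first e) = D.last e := by
  have hne := g.first_ne_root_of_mem_edges he
  rw [g.next_of_ne hne, ← (g.mem_edges_and_first_eq_iff hne).1 ⟨he, rfl⟩]

theorem outdegRev_edges_of_ne {v : D.V} (hv : v ≠ r) : D.outdegRev g.edges ∅ v = 1 := by
  rw [outdegRev_empty, Nat.card_eq_one_iff_exists]
  exact ⟨⟨_, (g.mem_edges_and_first_eq_iff hv).2 rfl⟩,
    fun e => Subtype.ext ((g.mem_edges_and_first_eq_iff hv).1 e.2)⟩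

theorem outdegRev_edges_root : D.outdegRev g.edges ∅ r = 0 := by
  rw [outdegRev_empty, Nat.card_eq_zero]
  exact Or.inl ⟨fun e => g.first_ne_root_of_mem_edges e.2.1 e.2.2⟩

theorem reach_root_of_reachesRoot {v : D.V} (hv : g.ReachesRoot v) : D.Reach g.edges v r := by
  obtain ⟨k, hk⟩ := hv
  induction k generalizing v with
  | zero =>
    rw [show v = r from hk]
    exact .refl
  | succ k ih =>
    by_cases hvr : v = r
    · rw [hvr]
      exact .refl
    exact .head ⟨g ⟨v, hvr⟩, ⟨_, rfl⟩, .inl ⟨(g _).2, (g.next_of_ne hvr).symm⟩⟩ (ih hk)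

theorem reachesRoot_iff_of_reach {a b : D.V} (h : D.Reach g.edges a b) :
    g.ReachesRoot a ↔ g.ReachesRoot b := by
  induction h with
  | refl => rfl
  | tail _ hadj ih =>
    obtain ⟨e, he, ⟨rfl, rfl⟩ | ⟨rfl, rfl⟩⟩ := hadj <;>
      rw [ih, ← g.next_first_of_mem_edges he, g.reachesRoot_next_iff]

theorem isOrientedSpanningTree_edges_iff :
    D.IsOrientedSpanningTree g.edges r ↔ ∀ v, g.ReachesRoot v := by
  constructor
  · rintro ⟨⟨hreach, -⟩, -⟩ v
    exact (g.reachesRoot_iff_of_reach (hreach v r)).2 g.reachesRoot_root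
  · intro h
    refine ⟨⟨fun a b => ?_, g.card_edges⟩, Set.empty_subset _,
      fun v hv => g.outdegRev_edges_of_ne hv, g.outdegRev_edges_root⟩
    exact (g.reach_root_of_reachesRoot (h a)).trans (reach_symm (g.reach_root_of_reachesRoot (h b)))

theorem edges_injective : Function.Injective (edges : D.OutEdgeChoice r → Set D.E) :=
  fun g g' h => funext fun v => Subtype.ext
    ((g'.mem_edges_and_first_eq_iff v.2).1 ⟨h ▸ ⟨v, rfl⟩, (g v).2⟩)

/-- The reduced Laplacian of the subgraph `g.edges`: the terms of the row-by-row expansion of the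
reduced Laplacian of `D`. -/
noncomputable def matrix : Matrix {v : D.V // v ≠ r} {v : D.V // v ≠ r} ℤ :=
  Matrix.of fun v w => (Pi.single (v : D.V) 1 - Pi.single (D.last (g v)) 1 : D.V → ℤ) w

theorem det_matrix_of_forall_reachesRoot (hg : ∀ v, g.ReachesRoot v) : g.matrix.det = 1 := by
  replace hg : ∀ v, ∃ k, g.next^[k] v = r := hg
  have height_next_lt : ∀ v ≠ r, Nat.find (hg (g.next v)) < Nat.find (hg v) := fun v hv => by
    have hspec := Nat.find_spec (hg v)
    obtain ⟨m, hm⟩ : ∃ m, Nat.find (hg v) = m + 1 :=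
      Nat.exists_eq_succ_of_ne_zero fun h => hv (by rw [h] at hspec; exact hspec)
    rw [hm, Function.iterate_succ_apply] at hspec
    exact hm ▸ Nat.lt_succ_of_le (Nat.find_min' _ hspec)
  refine Matrix.det_eq_one_of_apply_eq_one_apply_of_le (fun v => Nat.find (hg v)) fun v w hvw => ?_
  have hw : (w : D.V) ≠ g.next v := fun h => (height_next_lt v v.2).not_ge (h ▸ hvw)
  rw [g.next_of_ne v.2] at hw
  simp [matrix, Pi.single_apply, hw, Matrix.one_apply, Subtype.ext_iff, eq_comm]

/-- The indicator of the vertices that never reach the root is a kernel vector. -/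
theorem det_matrix_of_not_reachesRoot {v : D.V} (hv : ¬ g.ReachesRoot v) : g.matrix.det = 0 := by
  have hvr : v ≠ r := fun h => hv (h ▸ g.reachesRoot_root)
  let y : D.V → ℤ := fun w => if g.ReachesRoot w then 0 else 1
  refine Matrix.det_eq_zero_of_mulVec_eq_zero_of_mem_nonZeroDivisors (v := fun w => y w)
    (i := ⟨v, hvr⟩) ?_ (by simp [y, hv])
  funext u
  let F w := (Pi.single (u : D.V) 1 - Pi.single (D.last (g u)) 1 : D.V → ℤ) w * y w
  have hFr : F r = 0 := by simp [F, y, g.reachesRoot_root]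
  calc Matrix.mulVec g.matrix (fun w => y w) u = ∑ w ∈ Finset.univ.erase r, F w :=
        (Finset.sum_subtype _ (by simp) F).symm
    _ = y u - y (g.next u) := by
        rw [Finset.sum_erase _ hFr, g.next_of_ne u.2]
        simp [F, sub_mul, Finset.sum_sub_distrib, Pi.single_apply]
    _ = 0 := by simp [y, g.reachesRoot_next_iff]

end OutEdgeChoice

theorem exists_edges_eq_of_isOrientedSpanningTree {T : Set D.E}
    (hT : D.IsOrientedSpanningTree T r) : ∃ g : D.OutEdgeChoice r, g.edges = T := by
  obtain ⟨-, -, hout, hroot⟩ := hT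
  have hunique : ∀ v : {v // v ≠ r}, ∃ e, (e ∈ T ∧ D.first e = v) ∧
      ∀ e', e' ∈ T ∧ D.first e' = v → e' = e := fun v => by
    have hv := hout v v.2
    rw [outdegRev_empty, Nat.card_eq_one_iff_exists] at hv
    obtain ⟨⟨e, he⟩, hall⟩ := hv
    exact ⟨e, he, fun e' he' => congrArg Subtype.val (hall ⟨e', he'⟩)⟩
  choose F hF hFu using hunique
  refine ⟨fun v => ⟨F v, (hF v).2⟩, Set.Subset.antisymm ?_ fun e he => ?_⟩
  · rintro _ ⟨v, rfl⟩
    exact (hF v).1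
  · have hne : D.first e ≠ r := fun h => by
      rw [outdegRev_empty] at hroot
      have : Nonempty {e : D.E // e ∈ T ∧ D.first e = r} := ⟨⟨e, he, h⟩⟩
      exact Nat.card_pos.ne' hroot
    exact ⟨⟨_, hne⟩, (hFu _ e ⟨he, rfl⟩).symm⟩

theorem card_isOrientedSpanningTree_eq_card_reachesRoot :
    Nat.card {T : Set D.E // D.IsOrientedSpanningTree T r} =
      Nat.card {g : D.OutEdgeChoice r // ∀ v, g.ReachesRoot v} := by
  refine Nat.card_congr (Equiv.ofBijective
    (fun g => ⟨g.1.edges, g.1.isOrientedSpanningTree_edges_iff.2 g.2⟩) ⟨?_, ?_⟩).symm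
  · exact fun g g' h => Subtype.ext (OutEdgeChoice.edges_injective (congrArg Subtype.val h))
  · rintro ⟨T, hT⟩
    obtain ⟨g, rfl⟩ := exists_edges_eq_of_isOrientedSpanningTree hT
    exact ⟨⟨g, g.isOrientedSpanningTree_edges_iff.1 hT⟩, rfl⟩

theorem det_submatrix_laplacian (r : D.V) :
    (D.laplacian.submatrix ((↑) : {v // v ≠ r} → D.V) (↑)).det =
      ∑ g : D.OutEdgeChoice r, g.matrix.det := by
  have hrows : D.laplacian.submatrix ((↑) : {v // v ≠ r} → D.V) (↑) =
      Matrix.of fun v : {v // v ≠ r} => ∑ e : {e : D.E // D.first e = v},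
        fun w : {w // w ≠ r} => (Pi.single (v : D.V) 1 - Pi.single (D.last e) 1 : D.V → ℤ) w := by
    ext v w
    simp [laplacian, Finset.sum_apply]
  rw [hrows]
  exact Matrix.det_of_sum_eq_sum_det _

theorem natCast_card_isOrientedSpanningTree (r : D.V) :
    (Nat.card {T : Set D.E // D.IsOrientedSpanningTree T r} : ℤ) = D.laplacian.adjugate r r := by
  rw [Matrix.adjugate_apply_self_eq_det_submatrix, det_submatrix_laplacian,
    card_isOrientedSpanningTree_eq_card_reachesRoot, Nat.card_eq_fintype_card,
    Fintype.card_subtype, Finset.card_filter, Nat.cast_sum]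
  refine Finset.sum_congr rfl fun g _ => ?_
  push_cast
  split_ifs with hg
  · exact (g.det_matrix_of_forall_reachesRoot hg).symm
  · obtain ⟨v, hv⟩ := not_forall.1 hg
    exact (g.det_matrix_of_not_reachesRoot hv).symm

end Multidigraph

/-- For any Eulerian digraph `D`, the number of oriented spanning
trees of `D` is independent of the choice of root vertex. -/
theorem stmt2 (D : Multidigraph) (hD : D.Eulerian) (r r' : D.V) :
    Nat.card {T : Set D.E // D.IsOrientedSpanningTree T r} =
      Nat.card {T : Set D.E // D.IsOrientedSpanningTree T r'} := by
  have key : (Nat.card {T : Set D.E // D.IsOrientedSpanningTree T r} : ℤ) =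
      Nat.card {T : Set D.E // D.IsOrientedSpanningTree T r'} := by
    rw [D.natCast_card_isOrientedSpanningTree, D.natCast_card_isOrientedSpanningTree,
      Matrix.adjugate_apply_eq_of_forall_sum_row_eq_zero D.laplacian_row_sum_eq_zero r r' r,
      Matrix.adjugate_apply_eq_of_forall_sum_col_eq_zero (D.laplacian_col_sum_eq_zero hD.2) r' r r']
  exact_mod_cast key
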